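/- arXiv:2206.05282 — 2 statements merged into one kernel-verified Lean document; each statement's English description precedes it below -/
import Mathlib

section
/- Let d ≥ 2 be an integer and let v : {0,1}^d → ℝ be any coalitional game. The Shapley regression loss h_v(φ) = E_{s∼p_Sh}[(v(s) − v(0) − s^⊤φ)²] is μ-strongly convex as a function of φ ∈ ℝ^d with strong-convexity constant μ = 1/H_{d−1}; that is, the function φ ↦ h_v(φ) − (1/(2·H_{d−1}))·‖φ‖₂² is convex on ℝ^d. -/
open scoped BigOperators

/-- The `n`-th harmonic number `H_n = ∑_{k=1}^n 1/k`. -/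
noncomputable def harm (n : ℕ) : ℝ := ∑ k ∈ Finset.Icc 1 n, (1 : ℝ) / k

/-- Normalizing constant `Q = ∑_{k=1}^{d-1} (d-1)/(k(d-k))` of the Shapley kernel. -/
noncomputable def shapQ (d : ℕ) : ℝ :=
  ∑ k ∈ Finset.Icc 1 (d - 1), ((d : ℝ) - 1) / ((k : ℝ) * ((d : ℝ) - (k : ℝ)))

/-- Shapley kernel distribution on subsets `s ⊆ {1,…,d}`:
`p_Sh(s) = Q⁻¹ (d-1)/(C(d,k) k (d-k))` for `0 < k = |s| < d`, and `0` otherwise. -/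
noncomputable def pSh (d : ℕ) (s : Finset (Fin d)) : ℝ :=
  if 0 < s.card ∧ s.card < d then
    (((d : ℝ) - 1) /
      ((Nat.choose d s.card : ℝ) * (s.card : ℝ) * ((d : ℝ) - (s.card : ℝ)))) / shapQ d
  else 0

/-- Shapley regression loss `h_v(φ) = E_{s∼p_Sh}[(v(s) - v(0) - sᵀφ)²]`. -/
noncomputable def hLoss (d : ℕ) (v : Finset (Fin d) → ℝ)
    (φ : EuclideanSpace ℝ (Fin d)) : ℝ :=
  ∑ s : Finset (Fin d), pSh d s * (v s - v ∅ - ∑ i ∈ s, φ i) ^ 2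

/-!
The loss is a quadratic in `φ` whose quadratic part is `E[(sᵀφ)²] = ∑ᵢⱼ φᵢ φⱼ P(i, j ∈ s)`.
Double counting, `C(d, |u|) · P(u ⊆ s) = ∑ₘ C(m, |u|) · P(|s| = m)`, gives `P(i ∈ s) = 1/2`
and, for `i ≠ j`, `P(i, j ∈ s) = (H - 1)/(2H)` with `H = H_{d-1}`, so
`E[(sᵀφ)²] = ‖φ‖²/(2H) + (H - 1)/(2H) · (1ᵀφ)²`.
Hence `h_v(φ) - ‖φ‖²/(2H)` is an affine function plus a nonnegative multiple of `(1ᵀφ)²`,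
which is convex.
-/

open Finset

theorem Finset.sum_superset_eq_sum_powerset_compl {α R : Type*} [Fintype α] [DecidableEq α]
    [AddCommMonoid R] (u : Finset α) (g : ℕ → R) :
    ∑ s with u ⊆ s, g #s = ∑ t ∈ uᶜ.powerset, g (#t + #u) := by
  refine sum_nbij' (· \ u) (· ∪ u) ?_ ?_ ?_ ?_ ?_
  · intro s _
    simp only [sdiff_eq_inter_compl, mem_powerset, inter_subset_right]
  · intro t _
    simp only [mem_filter, mem_univ, subset_union_right, and_self]
  · intro s hs
    simp only [mem_filter, mem_univ, true_and] at hs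
    exact sdiff_union_of_subset hs
  · intro t ht
    simp only [mem_powerset] at ht
    exact union_sdiff_cancel_right (disjoint_left.2 fun a ha hu => (mem_compl.1 (ht ha)) hu)
  · intro s hs
    simp only [mem_filter, mem_univ, true_and] at hs
    rw [card_sdiff_of_subset hs, Nat.sub_add_cancel (card_le_card hs)]

theorem Finset.choose_mul_sum_superset {α R : Type*} [Fintype α] [DecidableEq α]
    [CommSemiring R] (u : Finset α) (g : ℕ → R) :
    ((Fintype.card α).choose #u : R) * ∑ s with u ⊆ s, g #s =
      ∑ m ∈ range (Fintype.card α + 1),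
        ((Fintype.card α).choose m * m.choose #u : ℕ) * g m := by
  have hr : #u ≤ Fintype.card α := card_le_univ u
  rw [sum_superset_eq_sum_powerset_compl, sum_powerset_apply_card (fun k => g (k + #u)),
    card_compl, mul_sum, ← sum_range_add_sum_Ico _ (by omega : #u ≤ Fintype.card α + 1),
    sum_Ico_eq_sum_range,
    sum_eq_zero (s := range #u) fun m hm => by simp [Nat.choose_eq_zero_of_lt (mem_range.1 hm)],
    zero_add, Nat.sub_add_comm hr]
  refine sum_congr rfl fun k _ => ?_
  rw [add_comm #u k, Nat.choose_mul (Nat.le_add_left _ _), Nat.add_sub_cancel, nsmul_eq_mul]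
  push_cast
  ring

theorem Finset.sum_mul_sq_sum {α R : Type*} [Fintype α] [DecidableEq α] [CommSemiring R]
    (p : Finset α → R) (z : α → R) :
    ∑ s, p s * (∑ i ∈ s, z i) ^ 2 = ∑ i, ∑ j, z i * z j * ∑ s with i ∈ s ∧ j ∈ s, p s := by
  simp_rw [mul_sum, sum_filter]
  conv_rhs => enter [2, i]; rw [sum_comm]
  rw [sum_comm]
  refine sum_congr rfl fun s _ => ?_
  simp only [ite_and, sum_ite_irrel, sum_ite_mem, univ_inter, sum_const_zero]
  rw [sq, sum_mul_sum, mul_sum]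
  exact sum_congr rfl fun i _ => by rw [mul_sum]; exact sum_congr rfl fun j _ => by ring

theorem Finset.sum_sum_mul_mul_ite {α R : Type*} [Fintype α] [DecidableEq α] [CommRing R]
    (a b : R) (z : α → R) :
    ∑ i, ∑ j, z i * z j * (if i = j then a else b) =
      (a - b) * ∑ i, z i ^ 2 + b * (∑ i, z i) ^ 2 := by
  have h : ∀ i j, z i * z j * (if i = j then a else b) =
      b * (z i * z j) + if i = j then (a - b) * z i ^ 2 else 0 := by
    intro i j
    split_ifs with h <;> [subst h; skip] <;> ring
  simp_rw [h, sum_add_distrib, sum_ite_eq, mem_univ, if_true, ← mul_sum]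
  rw [sq, sum_mul]
  ring

theorem convexOn_const_add_add_mul_sq {E : Type*} [AddCommGroup E] [Module ℝ E] (c : ℝ)
    (ℓ σ : E →ₗ[ℝ] ℝ) {b : ℝ} (hb : 0 ≤ b) :
    ConvexOn ℝ Set.univ fun x => c + ℓ x + b * σ x ^ 2 := by
  have hsq : ConvexOn ℝ Set.univ fun x => σ x ^ 2 :=
    (even_two.convexOn_pow (𝕜 := ℝ)).comp_linearMap σ
  exact ((convexOn_const c convex_univ).add (ℓ.convexOn convex_univ)).add (hsq.smul hb)

lemma one_le_harm {n : ℕ} (hn : 1 ≤ n) : 1 ≤ harm n := by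
  simpa [harm] using single_le_sum (f := fun k : ℕ => (1 : ℝ) / k) (fun _ _ => by positivity)
    (mem_Icc.2 ⟨le_rfl, hn⟩)

lemma harm_pos {n : ℕ} (hn : 1 ≤ n) : 0 < harm n := one_pos.trans_le (one_le_harm hn)

lemma sum_Icc_one_div_sub (d : ℕ) :
    ∑ k ∈ Icc 1 (d - 1), 1 / ((d : ℝ) - k) = harm (d - 1) := by
  refine sum_nbij' (d - ·) (d - ·) ?_ ?_ ?_ ?_ ?_
  iterate 4 intro k hk; simp only [mem_Icc] at hk ⊢; omega
  · intro k hk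
    rw [Nat.cast_sub (by simp only [mem_Icc] at hk; omega)]

lemma shapQ_eq (d : ℕ) : shapQ d = 2 * ((d : ℝ) - 1) * harm (d - 1) / d := by
  have hterm : ∀ k ∈ Icc 1 (d - 1), ((d : ℝ) - 1) / (k * ((d : ℝ) - k)) =
      ((d : ℝ) - 1) / d * (1 / k + 1 / ((d : ℝ) - k)) := by
    intro k hk
    obtain ⟨hk1, hkd⟩ := mem_Icc.1 hk
    have hkd' : (k : ℝ) < d := by exact_mod_cast (by omega : k < d)
    have hk0 : (0 : ℝ) < k := by exact_mod_cast hk1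
    have : (d : ℝ) - k ≠ 0 := by linarith
    have : (d : ℝ) ≠ 0 := by linarith
    field_simp
    ring
  rw [shapQ, sum_congr rfl hterm, ← mul_sum, sum_add_distrib, sum_Icc_one_div_sub, harm]
  ring

noncomputable def shapleyKernel (d k : ℕ) : ℝ :=
  if 0 < k ∧ k < d then
    (((d : ℝ) - 1) / ((Nat.choose d k : ℝ) * (k : ℝ) * ((d : ℝ) - (k : ℝ)))) / shapQ d
  else 0

lemma pSh_eq_shapleyKernel (d : ℕ) (s : Finset (Fin d)) : pSh d s = shapleyKernel d #s := rfl

lemma choose_mul_sum_superset_pSh (d : ℕ) (u : Finset (Fin d)) :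
    (d.choose #u : ℝ) * ∑ s with u ⊆ s, pSh d s =
      ∑ m ∈ Icc 1 (d - 1),
        (m.choose #u : ℝ) * (((d : ℝ) - 1) / (m * ((d : ℝ) - m)) / shapQ d) := by
  simp only [pSh_eq_shapleyKernel]
  have h := choose_mul_sum_superset u (shapleyKernel d)
  rw [Fintype.card_fin] at h
  rw [h, ← sum_subset (s₁ := Icc 1 (d - 1))
    (fun m hm => by simp only [mem_Icc, mem_range] at hm ⊢; omega)]
  · refine sum_congr rfl fun m hm => ?_
    obtain ⟨hm1, hmd⟩ := mem_Icc.1 hm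
    rw [shapleyKernel, if_pos (by omega)]
    have : (d.choose m : ℝ) ≠ 0 := by exact_mod_cast (Nat.choose_pos (by omega)).ne'
    push_cast
    field_simp
  · intro m _ hm
    rw [shapleyKernel, if_neg (by simp only [mem_Icc] at hm; omega), mul_zero]

lemma sum_pSh_mem {d : ℕ} (hd : 2 ≤ d) (i : Fin d) : ∑ s with i ∈ s, pSh d s = 1 / 2 := by
  have h := choose_mul_sum_superset_pSh d {i}
  simp only [singleton_subset_iff, card_singleton, Nat.choose_one_right] at h
  have hterm : ∀ m ∈ Icc 1 (d - 1), (m : ℝ) * (((d : ℝ) - 1) / (m * ((d : ℝ) - m)) / shapQ d) =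
      ((d : ℝ) - 1) / shapQ d * (1 / ((d : ℝ) - m)) := by
    intro m hm
    have : (m : ℝ) ≠ 0 := by simp only [mem_Icc] at hm; exact_mod_cast (by omega : m ≠ 0)
    field_simp
  rw [sum_congr rfl hterm, ← mul_sum, sum_Icc_one_div_sub, shapQ_eq] at h
  have : (d : ℝ) - 1 ≠ 0 := by linarith [show (2 : ℝ) ≤ d by exact_mod_cast hd]
  have := (harm_pos (n := d - 1) (by omega)).ne'
  field_simp at h
  linarith

lemma sum_pSh_mem_mem {d : ℕ} (hd : 2 ≤ d) {i j : Fin d} (hij : i ≠ j) :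
    ∑ s with i ∈ s ∧ j ∈ s, pSh d s = (harm (d - 1) - 1) / (2 * harm (d - 1)) := by
  have h := choose_mul_sum_superset_pSh d {i, j}
  simp only [insert_subset_iff, singleton_subset_iff, card_pair hij, Nat.cast_choose_two] at h
  have hterm : ∀ m ∈ Icc 1 (d - 1),
      (m : ℝ) * (m - 1) / 2 * (((d : ℝ) - 1) / (m * ((d : ℝ) - m)) / shapQ d) =
        ((d : ℝ) - 1) / (2 * shapQ d) * (((d : ℝ) - 1) * (1 / ((d : ℝ) - m)) - 1) := by
    intro m hm
    obtain ⟨hm1, hmd⟩ := mem_Icc.1 hm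
    have : (m : ℝ) ≠ 0 := by exact_mod_cast (by omega : m ≠ 0)
    have : (d : ℝ) - m ≠ 0 := sub_ne_zero.2 (by exact_mod_cast (by omega : d ≠ m))
    field_simp
    ring
  rw [sum_congr rfl hterm, ← mul_sum, sum_sub_distrib, ← mul_sum, sum_Icc_one_div_sub,
    sum_const, Nat.card_Icc, Nat.add_sub_cancel, nsmul_one, Nat.cast_pred (by omega),
    shapQ_eq] at h
  have : (d : ℝ) - 1 ≠ 0 := by linarith [show (2 : ℝ) ≤ d by exact_mod_cast hd]
  have := (harm_pos (n := d - 1) (by omega)).ne'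
  have : (d : ℝ) ≠ 0 := by positivity
  field_simp at h ⊢
  linear_combination h

lemma sum_pSh_mul_sq {d : ℕ} (hd : 2 ≤ d) (z : Fin d → ℝ) :
    ∑ s, pSh d s * (∑ i ∈ s, z i) ^ 2 =
      1 / (2 * harm (d - 1)) * ∑ i, z i ^ 2 +
        (harm (d - 1) - 1) / (2 * harm (d - 1)) * (∑ i, z i) ^ 2 := by
  have hpair : ∀ i j, ∑ s with i ∈ s ∧ j ∈ s, pSh d s =
      if i = j then 1 / 2 else (harm (d - 1) - 1) / (2 * harm (d - 1)) := by
    intro i j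
    split_ifs with hij
    · simpa only [hij, and_self] using sum_pSh_mem hd j
    · exact sum_pSh_mem_mem hd hij
  simp_rw [sum_mul_sq_sum, hpair, sum_sum_mul_mul_ite]
  have := (harm_pos (n := d - 1) (by omega)).ne'
  congr 2
  field_simp
  ring

lemma hLoss_sub_eq {d : ℕ} (hd : 2 ≤ d) (v : Finset (Fin d) → ℝ) (φ : EuclideanSpace ℝ (Fin d)) :
    hLoss d v φ - 1 / (2 * harm (d - 1)) * ‖φ‖ ^ 2 =
      ∑ s, pSh d s * (v s - v ∅) ^ 2 - 2 * ∑ s, pSh d s * (v s - v ∅) * ∑ i ∈ s, φ i +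
        (harm (d - 1) - 1) / (2 * harm (d - 1)) * (∑ i, φ i) ^ 2 := by
  have hexpand : hLoss d v φ = ∑ s, pSh d s * (v s - v ∅) ^ 2 -
      2 * ∑ s, pSh d s * (v s - v ∅) * ∑ i ∈ s, φ i + ∑ s, pSh d s * (∑ i ∈ s, φ i) ^ 2 := by
    rw [hLoss, mul_sum, ← sum_sub_distrib, ← sum_add_distrib]
    exact sum_congr rfl fun s _ => by ring
  rw [hexpand, sum_pSh_mul_sq hd, EuclideanSpace.real_norm_sq_eq]
  ring

/-- The Shapley regression loss is `μ`-strongly convex with `μ = 1/H_{d-1}`: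
`φ ↦ h_v(φ) - (1/(2 H_{d-1})) ‖φ‖²` is convex on `ℝ^d`. -/
theorem shapley_loss_strongly_convex (d : ℕ) (hd : 2 ≤ d) (v : Finset (Fin d) → ℝ) :
    ConvexOn ℝ Set.univ
      (fun φ : EuclideanSpace ℝ (Fin d) =>
        hLoss d v φ - (1 / (2 * harm (d - 1))) * ‖φ‖ ^ 2) := by
  have hH : 1 ≤ harm (d - 1) := one_le_harm (by omega)
  have hb : 0 ≤ (harm (d - 1) - 1) / (2 * harm (d - 1)) :=
    div_nonneg (sub_nonneg.2 hH) (by linarith)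
  let coalitionSum (s : Finset (Fin d)) : EuclideanSpace ℝ (Fin d) →ₗ[ℝ] ℝ :=
    ∑ i ∈ s, (EuclideanSpace.proj i : EuclideanSpace ℝ (Fin d) →L[ℝ] ℝ).toLinearMap
  refine (convexOn_const_add_add_mul_sq (∑ s, pSh d s * (v s - v ∅) ^ 2)
    ((-2 : ℝ) • ∑ s, (pSh d s * (v s - v ∅)) • coalitionSum s) (coalitionSum univ) hb).congr
    fun φ _ => ?_
  rw [hLoss_sub_eq hd]
  simp only [coalitionSum, LinearMap.smul_apply, LinearMap.sum_apply, ContinuousLinearMap.coe_coe,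
    PiLp.proj_apply, smul_eq_mul]
  ring
end

section
/- Let d ≥ 2 be an integer and let s be distributed according to the Shapley kernel distribution p_Sh on {0,1}^d. Then for every pair of distinct indices i ≠ j in {1,…,d}, the pairwise inclusion probability satisfies Pr(s_i = 1 and s_j = 1) = (Σ_{k=2}^{d−1} (k−1)/(d·(d−k))) / (Σ_{k=1}^{d−1} (d−1)/(k·(d−k))). -/
open scoped BigOperators

/-- Auxiliary: value of `pSh` as a function of the cardinality. -/
noncomputable def pShF (d k : ℕ) : ℝ :=
  if 0 < k ∧ k < d then
    (((d : ℝ) - 1) / ((Nat.choose d k : ℝ) * (k : ℝ) * ((d : ℝ) - (k : ℝ)))) / shapQ d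
  else 0

lemma pSh_eq_pShF (d : ℕ) (s : Finset (Fin d)) : pSh d s = pShF d s.card := rfl

lemma choose_key (e m : ℕ) :
    (e + 2).choose (m + 2) * ((m + 2) * (m + 1)) = e.choose m * ((e + 2) * (e + 1)) := by
  have A := Nat.add_one_mul_choose_eq (e + 1) (m + 1)
  have B := Nat.add_one_mul_choose_eq e m
  calc (e + 2).choose (m + 2) * ((m + 2) * (m + 1))
      = ((e + 2).choose (m + 2) * (m + 2)) * (m + 1) := by ring
    _ = ((e + 2) * (e + 1).choose (m + 1)) * (m + 1) := by
        rw [← A]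
    _ = (e + 2) * ((e + 1).choose (m + 1) * (m + 1)) := by ring
    _ = (e + 2) * ((e + 1) * e.choose m) := by
        rw [← B]
    _ = e.choose m * ((e + 2) * (e + 1)) := by ring

/-- The pairwise inclusion probability of two distinct indices under the Shapley kernel
distribution equals `(∑_{k=2}^{d-1} (k-1)/(d(d-k))) / (∑_{k=1}^{d-1} (d-1)/(k(d-k)))`. -/
theorem shapley_kernel_pairwise (d : ℕ) (hd : 2 ≤ d) (i j : Fin d) (hij : i ≠ j) :
    (∑ s ∈ Finset.univ.filter (fun s : Finset (Fin d) => i ∈ s ∧ j ∈ s), pSh d s) =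
      (∑ k ∈ Finset.Icc 2 (d - 1), ((k : ℝ) - 1) / ((d : ℝ) * ((d : ℝ) - (k : ℝ)))) /
        (∑ k ∈ Finset.Icc 1 (d - 1), ((d : ℝ) - 1) / ((k : ℝ) * ((d : ℝ) - (k : ℝ)))) := by
  classical
  obtain ⟨e, rfl⟩ : ∃ e, d = e + 2 := ⟨d - 2, by omega⟩
  -- the set difference
  set T : Finset (Fin (e + 2)) := Finset.univ \ {i, j} with hT
  have hTcard : T.card = e := by
    rw [hT, Finset.card_sdiff_of_subset (Finset.subset_univ _), Finset.card_univ]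
    simp [Finset.card_insert_of_notMem, hij]
  -- Step 1: reindex by removing {i,j}
  have h1 : (∑ s ∈ Finset.univ.filter (fun s : Finset (Fin (e + 2)) => i ∈ s ∧ j ∈ s),
        pSh (e + 2) s) = ∑ t ∈ T.powerset, pShF (e + 2) (t.card + 2) := by
    refine Finset.sum_nbij' (fun s => s \ {i, j}) (fun t => insert i (insert j t)) ?_ ?_ ?_ ?_ ?_
    · intro s hs
      rw [Finset.mem_powerset, hT]
      exact Finset.sdiff_subset_sdiff (Finset.subset_univ s) le_rfl
    · intro t ht
      simp [Finset.mem_filter]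
    · intro s hs
      rw [Finset.mem_filter] at hs
      obtain ⟨-, his, hjs⟩ := hs
      ext a
      simp only [Finset.mem_insert, Finset.mem_sdiff, Finset.mem_singleton]
      constructor
      · rintro (rfl | rfl | ⟨ha, -⟩) <;> assumption
      · intro ha
        by_cases h1 : a = i
        · exact Or.inl h1
        · by_cases h2 : a = j
          · exact Or.inr (Or.inl h2)
          · exact Or.inr (Or.inr ⟨ha, by simp [h1, h2]⟩)
    · intro t ht
      rw [Finset.mem_powerset, hT] at ht
      have hit : i ∉ t := fun h => by simpa using (ht h)
      have hjt : j ∉ t := fun h => by simpa using (ht h)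
      ext a
      simp only [Finset.mem_sdiff, Finset.mem_insert, Finset.mem_singleton]
      constructor
      · rintro ⟨(rfl | rfl | ha), h2⟩
        · exact absurd (Or.inl rfl) h2
        · exact absurd (Or.inr rfl) h2
        · exact ha
      · intro ha
        refine ⟨Or.inr (Or.inr ha), ?_⟩
        rintro (rfl | rfl) <;> [exact hit ha; exact hjt ha]
    · intro s hs
      rw [Finset.mem_filter] at hs
      obtain ⟨-, his, hjs⟩ := hs
      have hsub : ({i, j} : Finset (Fin (e + 2))) ⊆ s := by
        intro a ha
        simp only [Finset.mem_insert, Finset.mem_singleton] at ha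
        rcases ha with rfl | rfl <;> assumption
      have hcard2 : ({i, j} : Finset (Fin (e + 2))).card = 2 := by
        simp [Finset.card_insert_of_notMem, hij]
      have h2le : 2 ≤ s.card := by
        have := Finset.card_le_card hsub; omega
      have : (s \ {i, j}).card = s.card - 2 := by
        rw [Finset.card_sdiff_of_subset hsub, hcard2]
      rw [pSh_eq_pShF, this]
      congr 1
      omega
  rw [h1]
  -- Step 2: group by cardinality
  rw [Finset.sum_powerset_apply_card (fun k => pShF (e + 2) (k + 2)), hTcard]
  -- Step 3: strip last (zero) term
  rw [Finset.sum_range_succ]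
  have hlast : pShF (e + 2) (e + 2) = 0 := by
    simp [pShF]
  rw [hlast, smul_zero, add_zero]
  -- Step 4: rewrite RHS and compare termwise
  have hQdef : (∑ k ∈ Finset.Icc 1 (e + 1),
      (((e + 2 : ℕ) : ℝ) - 1) / ((k : ℝ) * (((e + 2 : ℕ) : ℝ) - (k : ℝ)))) = shapQ (e + 2) := rfl
  rw [show (e + 2 - 1 : ℕ) = e + 1 by omega]
  rw [hQdef, Finset.sum_div]
  refine Finset.sum_nbij' (fun m => m + 2) (fun k => k - 2) ?_ ?_ ?_ ?_ ?_
  · intro m hm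
    rw [Finset.mem_range] at hm
    simp only [Finset.mem_Icc]
    omega
  · intro k hk
    rw [Finset.mem_Icc] at hk
    simp only [Finset.mem_range]
    omega
  · intro m hm
    omega
  · intro k hk
    rw [Finset.mem_Icc] at hk
    omega
  · intro m hm
    rw [Finset.mem_range] at hm
    have hchoose : (0 : ℝ) < ((e + 2).choose (m + 2) : ℝ) := by
      exact_mod_cast Nat.choose_pos (by omega : m + 2 ≤ e + 2)
    have hshow : pShF (e + 2) (m + 2) =
        ((((e + 2 : ℕ) : ℝ) - 1) /
          (((e + 2).choose (m + 2) : ℝ) * ((m + 2 : ℕ) : ℝ) *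
            (((e + 2 : ℕ) : ℝ) - ((m + 2 : ℕ) : ℝ)))) / shapQ (e + 2) := by
      rw [pShF, if_pos ⟨by omega, by omega⟩]
    rw [hshow, nsmul_eq_mul, ← mul_div_assoc]
    congr 1
    have hkey : (((e + 2).choose (m + 2) : ℝ)) * (((m : ℝ) + 2) * ((m : ℝ) + 1)) =
        (e.choose m : ℝ) * (((e : ℝ) + 2) * ((e : ℝ) + 1)) := by
      exact_mod_cast congrArg (Nat.cast : ℕ → ℝ) (choose_key e m)
    have hem : (0 : ℝ) < (e : ℝ) - (m : ℝ) := by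
      have : (m : ℝ) < (e : ℝ) := by exact_mod_cast hm
      linarith
    push_cast
    rw [mul_div_assoc', div_eq_div_iff]
    · nlinarith [hkey, hchoose, hem]
    · exact ne_of_gt (mul_pos (mul_pos hchoose (by positivity)) (by linarith))
    · exact ne_of_gt (mul_pos (by positivity) (by linarith))
end
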